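/- Let p > 1, g(u) = u|u|^{p-1}, and T > 0. Suppose φ : [0,T] × [0,1] → ℝ is twice continuously differentiable and satisfies φ(t,0) = φ(t,1) = 0 for all t ∈ [0,T]. Then for every T' ∈ [0,T], (1/2) ∫₀^{T'} ∫₀¹ ( ∂_t φ(t,x) − ∂²_{xx} φ(t,x) − g(φ(t,x)) )² dx dt ≥ 2 ( S(φ(T',·)) − S(φ(0,·)) ); consequently the rate (1/2) ∫₀^{T} ∫₀¹ ( ∂_t φ − ∂²_{xx} φ − g(φ) )² is at least 2 sup_{0 ≤ T' ≤ T} ( S(φ(T',·)) − S(φ(0,·)) ). -/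

import Mathlib

/-!
Write `A = ∂ₜφ` and `L = ∂ₓ²φ + g(φ)`, so that the rate density is `(A - L)²`. As
`g = G'` for `G(u) = |u|^{p+1}/(p+1)`, differentiating `S(φ(t,·))` in time and integrating by
parts in `x` (the boundary term vanishes because `∂ₜφ = 0` at `x = 0, 1`) gives
`d/dt S(φ(t,·)) = -∫ A L dx`, and `-4AL ≤ (A - L)²` since the difference is `(A + L)²`.
Integrating in time gives the first bound; the second follows because the rate only grows with
the time horizon.
-/

open Set

/-- The potential `S(v) = ∫₀¹ ((1/2) v'(x)² − |v(x)|^{p+1}/(p+1)) dx`. -/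
noncomputable def potS (p : ℝ) (v : ℝ → ℝ) : ℝ :=
  ∫ x in (0:ℝ)..1, ((1/2) * (deriv v x) ^ 2 - |v x| ^ (p + 1) / (p + 1))

open MeasureTheory

section PartialDerivatives

variable {E : Type*} [NormedAddCommGroup E] [NormedSpace ℝ E] {F : ℝ × ℝ → E}

noncomputable def partialFst (F : ℝ × ℝ → E) (q : ℝ × ℝ) : E := fderiv ℝ F q (1, 0)

noncomputable def partialSnd (F : ℝ × ℝ → E) (q : ℝ × ℝ) : E := fderiv ℝ F q (0, 1)

theorem DifferentiableAt.hasDerivAt_partialFst {t x : ℝ} (hF : DifferentiableAt ℝ F (t, x)) :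
    HasDerivAt (fun s => F (s, x)) (partialFst F (t, x)) t :=
  hF.hasFDerivAt.comp_hasDerivAt t ((hasDerivAt_id t).prodMk (hasDerivAt_const t x))

theorem DifferentiableAt.hasDerivAt_partialSnd {t x : ℝ} (hF : DifferentiableAt ℝ F (t, x)) :
    HasDerivAt (fun y => F (t, y)) (partialSnd F (t, x)) x :=
  hF.hasFDerivAt.comp_hasDerivAt x ((hasDerivAt_const x t).prodMk (hasDerivAt_id x))

theorem ContDiff.partialFst {n : WithTop ℕ∞} (hF : ContDiff ℝ (n + 1) F) :
    ContDiff ℝ n (partialFst F) :=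
  (hF.fderiv_right le_rfl).clm_apply contDiff_const

theorem ContDiff.partialSnd {n : WithTop ℕ∞} (hF : ContDiff ℝ (n + 1) F) :
    ContDiff ℝ n (partialSnd F) :=
  (hF.fderiv_right le_rfl).clm_apply contDiff_const

theorem fderiv_apply_eq_fderiv_fderiv {v : ℝ × ℝ} {q : ℝ × ℝ}
    (hF : DifferentiableAt ℝ (fderiv ℝ F) q) (w : ℝ × ℝ) :
    fderiv ℝ (fun q' => fderiv ℝ F q' v) q w = fderiv ℝ (fderiv ℝ F) q w v := by
  rw [(hF.hasFDerivAt.clm_apply (hasFDerivAt_const v q)).fderiv]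
  simp

theorem partialFst_partialSnd (hF : ContDiff ℝ 2 F) :
    partialFst (partialSnd F) = partialSnd (partialFst F) := by
  ext q
  have hF' : DifferentiableAt ℝ (fderiv ℝ F) q :=
    ((hF.fderiv_right (m := 1) le_rfl).differentiable one_ne_zero) q
  have hsymm := (hF.contDiffAt (x := q)).isSymmSndFDerivAt
    (by rw [minSmoothness_of_isRCLikeNormedField])
  change fderiv ℝ (fun q' => fderiv ℝ F q' (0, 1)) q (1, 0)
    = fderiv ℝ (fun q' => fderiv ℝ F q' (1, 0)) q (0, 1)
  rw [fderiv_apply_eq_fderiv_fderiv hF', fderiv_apply_eq_fderiv_fderiv hF', hsymm]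

theorem continuous_partialSnd_partialSnd (hF : ContDiff ℝ 2 F) :
    Continuous (partialSnd (partialSnd F)) :=
  (ContDiff.partialSnd (n := 0) (ContDiff.partialSnd (n := 1) hF)).continuous

theorem continuous_partialSnd_partialFst (hF : ContDiff ℝ 2 F) :
    Continuous (partialSnd (partialFst F)) :=
  (ContDiff.partialSnd (n := 0) (ContDiff.partialFst (n := 1) hF)).continuous

theorem deriv_deriv_eq_partialSnd_partialSnd (hF : Differentiable ℝ F)
    (hF' : Differentiable ℝ (partialSnd F)) (t x : ℝ) :
    deriv (deriv fun y => F (t, y)) x = partialSnd (partialSnd F) (t, x) := by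
  have hderiv : deriv (fun y => F (t, y)) = fun y => partialSnd F (t, y) :=
    funext fun y => (hF (t, y)).hasDerivAt_partialSnd.deriv
  rw [hderiv, (hF' (t, x)).hasDerivAt_partialSnd.deriv]

theorem partialFst_eq_zero_of_eventually {t x : ℝ} (hF : DifferentiableAt ℝ F (t, x))
    (h : ∀ᶠ s in nhds t, F (s, x) = 0) : partialFst F (t, x) = 0 := by
  rw [← hF.hasDerivAt_partialFst.deriv, Filter.EventuallyEq.deriv_eq h, deriv_const]

end PartialDerivatives

section ParametricIntegrals

variable {E : Type*} [NormedAddCommGroup E] [NormedSpace ℝ E]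

theorem intervalIntegral_integral_swap_of_continuous {f : ℝ × ℝ → E} (hf : Continuous f)
    {a b c d : ℝ} (hab : a ≤ b) (hcd : c ≤ d) :
    ∫ x in a..b, ∫ t in c..d, f (t, x) = ∫ t in c..d, ∫ x in a..b, f (t, x) := by
  simp only [intervalIntegral.integral_of_le hab, intervalIntegral.integral_of_le hcd]
  apply integral_integral_swap
  rw [Function.uncurry_def, Measure.prod_restrict, ← Measure.volume_eq_prod]
  refine IntegrableOn.mono_set ?_ (prod_mono Ioc_subset_Icc_self Ioc_subset_Icc_self)
  exact ContinuousOn.integrableOn_compact (isCompact_Icc.prod isCompact_Icc)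
    (hf.comp continuous_swap).continuousOn

theorem integral_sub_integral_eq_integral_integral [CompleteSpace E] {h k : ℝ × ℝ → E}
    (hh : Continuous h) (hk : Continuous k)
    (hderiv : ∀ t x, HasDerivAt (fun s => h (s, x)) (k (t, x)) t)
    {a b t₀ t₁ : ℝ} (hab : a ≤ b) (ht : t₀ ≤ t₁) :
    (∫ x in a..b, h (t₁, x)) - ∫ x in a..b, h (t₀, x)
      = ∫ t in t₀..t₁, ∫ x in a..b, k (t, x) := by
  have hftc : ∀ x, h (t₁, x) - h (t₀, x) = ∫ t in t₀..t₁, k (t, x) := fun x =>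
    (intervalIntegral.integral_eq_sub_of_hasDerivAt (fun t _ => hderiv t x)
      (Continuous.intervalIntegrable (by fun_prop) _ _)).symm
  have hint : ∀ t, IntervalIntegrable (fun x => h (t, x)) volume a b := fun t =>
    (by fun_prop : Continuous fun x => h (t, x)).intervalIntegrable _ _
  rw [← intervalIntegral.integral_sub (hint t₁) (hint t₀), intervalIntegral.integral_congr
    fun x _ => hftc x, intervalIntegral_integral_swap_of_continuous hk hab ht]

end ParametricIntegrals

section HeatEnergy

variable {F : ℝ × ℝ → ℝ} {G g : ℝ → ℝ} {a b : ℝ}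

/-- `potS p` is `energy 0 1 (fun u => |u| ^ (p + 1) / (p + 1))` by definition. -/
noncomputable def energy (a b : ℝ) (G : ℝ → ℝ) (v : ℝ → ℝ) : ℝ :=
  ∫ x in a..b, ((1/2) * (deriv v x) ^ 2 - G (v x))

noncomputable def energyDensity (G : ℝ → ℝ) (F : ℝ × ℝ → ℝ) (q : ℝ × ℝ) : ℝ :=
  (1/2) * partialSnd F q ^ 2 - G (F q)

noncomputable def energyDensityRate (g : ℝ → ℝ) (F : ℝ × ℝ → ℝ) (q : ℝ × ℝ) : ℝ :=
  partialSnd F q * partialSnd (partialFst F) q - g (F q) * partialFst F q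

noncomputable def heatResidual (g : ℝ → ℝ) (F : ℝ × ℝ → ℝ) (q : ℝ × ℝ) : ℝ :=
  partialFst F q - partialSnd (partialSnd F) q - g (F q)

theorem heatResidual_eq_deriv (hF : ContDiff ℝ 2 F) (t x : ℝ) :
    heatResidual g F (t, x)
      = deriv (fun s => F (s, x)) t - deriv (deriv fun y => F (t, y)) x - g (F (t, x)) := by
  have hFd : Differentiable ℝ F := hF.differentiable two_ne_zero
  rw [heatResidual, (hFd (t, x)).hasDerivAt_partialFst.deriv,
    deriv_deriv_eq_partialSnd_partialSnd hFd
      ((ContDiff.partialSnd (n := 1) hF).differentiable one_ne_zero)]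

theorem continuous_heatResidual (hF : ContDiff ℝ 2 F) (hg : Continuous g) :
    Continuous (heatResidual g F) := by
  have hFt := (ContDiff.partialFst (n := 1) hF).continuous
  have hFxx := continuous_partialSnd_partialSnd hF
  have hFc := hF.continuous
  unfold heatResidual
  fun_prop

theorem continuous_integral_heatResidual_sq (hF : ContDiff ℝ 2 F) (hg : Continuous g) :
    Continuous fun t => ∫ x in a..b, heatResidual g F (t, x) ^ 2 :=
  have := continuous_heatResidual hF hg
  intervalIntegral.continuous_parametric_intervalIntegral_of_continuous' (by fun_prop) a b

theorem energy_eq_integral_energyDensity (hF : Differentiable ℝ F) (t : ℝ) :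
    energy a b G (fun x => F (t, x)) = ∫ x in a..b, energyDensity G F (t, x) := by
  have hderiv : deriv (fun x => F (t, x)) = fun x => partialSnd F (t, x) :=
    funext fun x => (hF (t, x)).hasDerivAt_partialSnd.deriv
  rw [energy, hderiv]
  rfl

theorem hasDerivAt_energyDensity (hF : ContDiff ℝ 2 F) (hG : ∀ u, HasDerivAt G (g u) u)
    (t x : ℝ) :
    HasDerivAt (fun s => energyDensity G F (s, x)) (energyDensityRate g F (t, x)) t := by
  have hFx : HasDerivAt (fun s => partialSnd F (s, x)) (partialSnd (partialFst F) (t, x)) t := by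
    rw [← partialFst_partialSnd hF]
    exact ((ContDiff.partialSnd (n := 1) hF).differentiable one_ne_zero _).hasDerivAt_partialFst
  have hGF := (hG _).comp t ((hF.differentiable two_ne_zero) (t, x)).hasDerivAt_partialFst
  refine (((hFx.pow 2).const_mul (1/2 : ℝ)).sub hGF).congr_deriv ?_
  rw [energyDensityRate]
  ring

theorem integral_energyDensityRate_le (hF : ContDiff ℝ 2 F) (hg : Continuous g) (hab : a ≤ b)
    {t : ℝ} (ha : partialFst F (t, a) = 0) (hb : partialFst F (t, b) = 0) :
    ∫ x in a..b, energyDensityRate g F (t, x)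
      ≤ (1/4) * ∫ x in a..b, heatResidual g F (t, x) ^ 2 := by
  have hFt : ContDiff ℝ 1 (partialFst F) := ContDiff.partialFst (n := 1) hF
  have hFx : ContDiff ℝ 1 (partialSnd F) := ContDiff.partialSnd (n := 1) hF
  have hFxx := continuous_partialSnd_partialSnd hF
  have hFtx := continuous_partialSnd_partialFst hF
  have hFc := hF.continuous
  have hres := continuous_heatResidual hF hg
  have hibp : ∫ x in a..b, partialSnd F (t, x) * partialSnd (partialFst F) (t, x)
      = -∫ x in a..b, partialSnd (partialSnd F) (t, x) * partialFst F (t, x) := by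
    rw [intervalIntegral.integral_mul_deriv_eq_deriv_mul
      (fun x _ => (hFx.differentiable one_ne_zero _).hasDerivAt_partialSnd)
      (fun x _ => (hFt.differentiable one_ne_zero _).hasDerivAt_partialSnd)
      (Continuous.intervalIntegrable (by fun_prop) _ _)
      (Continuous.intervalIntegrable (by fun_prop) _ _), ha, hb]
    ring
  calc ∫ x in a..b, energyDensityRate g F (t, x)
      = -∫ x in a..b,
          (partialSnd (partialSnd F) (t, x) + g (F (t, x))) * partialFst F (t, x) := by
        simp only [energyDensityRate, add_mul]
        rw [intervalIntegral.integral_sub (Continuous.intervalIntegrable (by fun_prop) _ _)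
          (Continuous.intervalIntegrable (by fun_prop) _ _), hibp, intervalIntegral.integral_add
          (Continuous.intervalIntegrable (by fun_prop) _ _)
          (Continuous.intervalIntegrable (by fun_prop) _ _)]
        ring
    _ = ∫ x in a..b,
          -((partialSnd (partialSnd F) (t, x) + g (F (t, x))) * partialFst F (t, x)) :=
        intervalIntegral.integral_neg.symm
    _ ≤ ∫ x in a..b, (1/4) * heatResidual g F (t, x) ^ 2 := by
        refine intervalIntegral.integral_mono_on hab
          (Continuous.intervalIntegrable (by fun_prop) _ _)
          (Continuous.intervalIntegrable (by fun_prop) _ _) fun x _ => ?_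
        have := four_mul_le_sq_add (partialFst F (t, x))
          (-(partialSnd (partialSnd F) (t, x) + g (F (t, x))))
        rw [heatResidual]
        linarith
    _ = (1/4) * ∫ x in a..b, heatResidual g F (t, x) ^ 2 :=
        intervalIntegral.integral_const_mul _ _

theorem energy_sub_le (hF : ContDiff ℝ 2 F) (hG : ∀ u, HasDerivAt G (g u) u) (hg : Continuous g)
    (hab : a ≤ b) {t₀ t₁ : ℝ} (ht : t₀ ≤ t₁)
    (hbc : ∀ t ∈ Icc t₀ t₁, F (t, a) = 0 ∧ F (t, b) = 0) :
    energy a b G (fun x => F (t₁, x)) - energy a b G (fun x => F (t₀, x))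
      ≤ (1/4) * ∫ t in t₀..t₁, ∫ x in a..b, heatResidual g F (t, x) ^ 2 := by
  have hFd : Differentiable ℝ F := hF.differentiable two_ne_zero
  have hGc : Continuous G := continuous_iff_continuousAt.2 fun u => (hG u).continuousAt
  have hFc := hF.continuous
  have hFt := (ContDiff.partialFst (n := 1) hF).continuous
  have hFx := (ContDiff.partialSnd (n := 1) hF).continuous
  have hFtx := continuous_partialSnd_partialFst hF
  have hrate : Continuous (energyDensityRate g F) := by unfold energyDensityRate; fun_prop
  have hboundary : ∀ t ∈ Ioo t₀ t₁, ∀ᶠ s in nhds t, F (s, a) = 0 ∧ F (s, b) = 0 :=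
    fun t ht' => Filter.mem_of_superset (Icc_mem_nhds ht'.1 ht'.2) hbc
  rw [energy_eq_integral_energyDensity hFd, energy_eq_integral_energyDensity hFd,
    integral_sub_integral_eq_integral_integral (by unfold energyDensity; fun_prop) hrate
      (hasDerivAt_energyDensity hF hG) hab ht, ← intervalIntegral.integral_const_mul]
  refine intervalIntegral.integral_mono_ae_restrict ht
    (intervalIntegral.continuous_parametric_intervalIntegral_of_continuous'
      (f := fun t x => energyDensityRate g F (t, x)) hrate a b
      |>.intervalIntegrable _ _)
    ((continuous_integral_heatResidual_sq hF hg).const_mul _ |>.intervalIntegrable _ _) ?_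
  rw [← Measure.restrict_congr_set Ioo_ae_eq_Icc]
  exact ae_restrict_of_forall_mem measurableSet_Ioo fun t ht' =>
    integral_energyDensityRate_le hF hg hab
      (partialFst_eq_zero_of_eventually (hFd _) ((hboundary t ht').mono fun _ h => h.1))
      (partialFst_eq_zero_of_eventually (hFd _) ((hboundary t ht').mono fun _ h => h.2))

theorem integral_integral_heatResidual_sq_mono (hF : ContDiff ℝ 2 F) (hg : Continuous g)
    (hab : a ≤ b) {t₀ t₁ t₂ : ℝ} (h₀₁ : t₀ ≤ t₁) (h₁₂ : t₁ ≤ t₂) :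
    ∫ t in t₀..t₁, ∫ x in a..b, heatResidual g F (t, x) ^ 2
      ≤ ∫ t in t₀..t₂, ∫ x in a..b, heatResidual g F (t, x) ^ 2 :=
  intervalIntegral.integral_mono_interval le_rfl h₀₁ h₁₂
    (Filter.Eventually.of_forall fun _ =>
      intervalIntegral.integral_nonneg hab fun _ _ => sq_nonneg _)
    ((continuous_integral_heatResidual_sq hF hg).intervalIntegrable _ _)

end HeatEnergy

theorem hasDerivAt_abs_rpow_add_one_div {p : ℝ} (hp : 0 < p) (u : ℝ) :
    HasDerivAt (fun u => |u| ^ (p + 1) / (p + 1)) (u * |u| ^ (p - 1)) u := by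
  refine ((hasDerivAt_abs_rpow u (by linarith : 1 < p + 1)).div_const (p + 1)).congr_deriv ?_
  rw [show p + 1 - 2 = p - 1 by ring]
  field_simp

/-- The large deviations rate of any smooth Dirichlet path `φ` on `[0,T]` is bounded below
by `2 (S(φ(T',·)) − S(φ(0,·)))` for every `T' ∈ [0,T]`, hence by twice the supremum of the
potential increments. -/
theorem stmt3 (p T : ℝ) (hp : 1 < p) (hT : 0 < T) (φ : ℝ → ℝ → ℝ)
    (hφ : ContDiff ℝ 2 (fun q : ℝ × ℝ => φ q.1 q.2))
    (hbc : ∀ t ∈ Icc (0:ℝ) T, φ t 0 = 0 ∧ φ t 1 = 0) :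
    (∀ T' ∈ Icc (0:ℝ) T,
      2 * (potS p (φ T') - potS p (φ 0)) ≤
        (1/2) * ∫ t in (0:ℝ)..T', ∫ x in (0:ℝ)..1,
          (deriv (fun s => φ s x) t - deriv (deriv (φ t)) x
            - φ t x * |φ t x| ^ (p - 1)) ^ 2) ∧
    2 * sSup ((fun T' => potS p (φ T') - potS p (φ 0)) '' Icc (0:ℝ) T) ≤
      (1/2) * ∫ t in (0:ℝ)..T, ∫ x in (0:ℝ)..1,
        (deriv (fun s => φ s x) t - deriv (deriv (φ t)) x
          - φ t x * |φ t x| ^ (p - 1)) ^ 2 := by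
  set F : ℝ × ℝ → ℝ := fun q => φ q.1 q.2
  set g : ℝ → ℝ := fun u => u * |u| ^ (p - 1)
  have hg : Continuous g :=
    continuous_id.mul (continuous_abs.rpow_const fun _ => Or.inr (by linarith))
  have hresidual : ∀ t x, deriv (fun s => φ s x) t - deriv (deriv (φ t)) x
      - φ t x * |φ t x| ^ (p - 1) = heatResidual g F (t, x) :=
    fun t x => (heatResidual_eq_deriv (g := g) hφ t x).symm
  simp only [hresidual]
  have henergy : ∀ T' ∈ Icc 0 T, potS p (φ T') - potS p (φ 0)
      ≤ (1/4) * ∫ t in (0:ℝ)..T', ∫ x in (0:ℝ)..1, heatResidual g F (t, x) ^ 2 :=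
    fun T' hT' => energy_sub_le hφ (hasDerivAt_abs_rpow_add_one_div (by linarith)) hg
      zero_le_one hT'.1 fun t ht => hbc t ⟨ht.1, ht.2.trans hT'.2⟩
  refine ⟨fun T' hT' => by linarith [henergy T' hT'], ?_⟩
  have hsSup := csSup_le ((nonempty_Icc.2 hT.le).image _) (forall_mem_image.2 fun T' hT' =>
    (henergy T' hT').trans (mul_le_mul_of_nonneg_left
      (integral_integral_heatResidual_sq_mono hφ hg zero_le_one hT'.1 hT'.2) (by norm_num)))
  linarith
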